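/- arXiv:2304.13258 — 8 statements merged into one kernel-verified Lean document; each statement's English description precedes it below -/
import Mathlib

section
/- Let ℓ ≤ n be positive integers. Let 𝕊 ⊆ 𝔹 be a set of states, and let 𝒮 ⊆ 𝕊 support a spherical 2-design. Let M ∈ ℝ^{n×ℓ} satisfy Mᵀ u_n = u_ℓ and have rank ℓ (equivalently, P M = I_ℓ for a Moore–Penrose pseudoinverse P of M), and set 𝒫 := M𝒮 (the image of 𝒮 under v ↦ Mv). Then M ∈ ddi_𝕊(𝒫); that is, M ∈ ℳ_𝕊(𝒫) and det(MᵀM) ≤ det(NᵀN) for every N ∈ ℳ_𝕊(𝒫). -/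
/-!
Let `N` be any consistent quasi-measurement. Each `M sᵢ` equals `N vᵢ` for some state `vᵢ`, so
`R := P N` maps the `vᵢ` to the design states `sᵢ`. With `T := ∑ pᵢ vᵢ vᵢᵀ` the design identity
reads `R T Rᵀ = I/ℓ`; since `T ⪰ 0` has trace at most one, AM-GM on its eigenvalues gives
`det T ≤ ℓ^{-ℓ}`, hence `(det R)² ≥ 1`. Finally `M P` is an orthogonal projection, so
`Rᵀ (MᵀM) R = Nᵀ (M P) N ⪯ NᵀN` in the Loewner order, and the determinant is monotone there.
-/

open Matrix

/-- The ball `𝔹` of states: vectors on the hyperplane `uₗ ⬝ v = 1` with norm at most one. -/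
def stateBall (ℓ : ℕ) : Set (Fin ℓ → ℝ) :=
  {v | (1 : Fin ℓ → ℝ) ⬝ᵥ v = 1 ∧ v ⬝ᵥ v ≤ 1}

/-- The set `ℳ_𝕊(𝒬)` of quasi-measurements from `𝕊` consistent with `𝒬`. -/
def consistentSet {ℓ n : ℕ} (𝕊 : Set (Fin ℓ → ℝ)) (𝒬 : Set (Fin n → ℝ)) :
    Set (Matrix (Fin n) (Fin ℓ) ℝ) :=
  {M | Mᵀ *ᵥ (1 : Fin n → ℝ) = (1 : Fin ℓ → ℝ) ∧ 𝒬 ⊆ (fun v => M *ᵥ v) '' 𝕊}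

/-- The data-driven inference set: consistent quasi-measurements with
minimum-volume probability range, i.e. minimizing `det (MᵀM)`. -/
def ddi {ℓ n : ℕ} (𝕊 : Set (Fin ℓ → ℝ)) (𝒬 : Set (Fin n → ℝ)) :
    Set (Matrix (Fin n) (Fin ℓ) ℝ) :=
  {M ∈ consistentSet 𝕊 𝒬 | ∀ N ∈ consistentSet 𝕊 𝒬, (Mᵀ * M).det ≤ (Nᵀ * N).det}

theorem Real.prod_le_sum_div_card_pow {ι : Type*} [Fintype ι] [Nonempty ι] (x : ι → ℝ)
    (hx : ∀ i, 0 ≤ x i) : ∏ i, x i ≤ ((∑ i, x i) / Fintype.card ι) ^ Fintype.card ι := by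
  have hamgm := Real.geom_mean_le_arith_mean Finset.univ (fun _ ↦ 1) x (fun _ _ ↦ zero_le_one)
    (by simp [Fintype.card_pos]) (fun i _ ↦ hx i)
  simp only [Real.rpow_one, Finset.sum_const, Finset.card_univ, nsmul_eq_mul, mul_one,
    one_mul] at hamgm
  have hprod : 0 ≤ ∏ i, x i := Finset.prod_nonneg fun i _ ↦ hx i
  calc ∏ i, x i = ((∏ i, x i) ^ ((Fintype.card ι : ℝ)⁻¹)) ^ Fintype.card ι :=
        (Real.rpow_inv_natCast_pow hprod Fintype.card_ne_zero).symm
    _ ≤ _ := pow_le_pow_left₀ (Real.rpow_nonneg hprod _) hamgm _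

open scoped MatrixOrder

namespace Matrix

variable {m n : Type*} [Fintype m] [Fintype n] [DecidableEq n]

theorem PosSemidef.det_le_trace_div_card_pow [Nonempty n] {A : Matrix n n ℝ}
    (hA : A.PosSemidef) : A.det ≤ (A.trace / Fintype.card n) ^ Fintype.card n := by
  rw [hA.isHermitian.det_eq_prod_eigenvalues, hA.isHermitian.trace_eq_sum_eigenvalues]
  simpa using Real.prod_le_sum_div_card_pow _ hA.eigenvalues_nonneg

theorem one_le_det_of_one_le {A : Matrix n n ℝ} (hA : 1 ≤ A) : 1 ≤ A.det := by
  have hH : A.IsHermitian := by simpa using (le_iff.mp hA).isHermitian.add isHermitian_one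
  have hspec := (CFC.one_le_iff A (R := ℝ)).mp hA
  rw [hH.det_eq_prod_eigenvalues]
  simpa using Finset.one_le_prod fun i _ ↦ hspec _ (hH.eigenvalues_mem_spectrum_real i)

theorem det_le_det_of_le {A B : Matrix n n ℝ} (hA : 0 ≤ A) (hAB : A ≤ B) : A.det ≤ B.det := by
  rcases eq_or_ne A.det 0 with h0 | h0
  · rw [h0]; exact (nonneg_iff_posSemidef.mp (hA.trans hAB)).det_nonneg
  set S := CFC.sqrt A
  have hSS : S * S = A := CFC.sqrt_mul_sqrt_self A
  have hS : IsUnit S.det := by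
    rw [← hSS, det_mul] at h0
    exact (left_ne_zero_of_mul h0).isUnit
  have hS_inv : IsSelfAdjoint S⁻¹ := by
    rw [(nonneg_iff_posSemidef.mp hA).inv_sqrt]
    exact .of_nonneg (CFC.sqrt_nonneg _)
  have hone : S⁻¹ * A * S⁻¹ = 1 := by
    rw [← hSS, ← Matrix.mul_assoc, nonsing_inv_mul _ hS, Matrix.one_mul, mul_nonsing_inv _ hS]
  have h1 := one_le_det_of_one_le (hone ▸ hS_inv.conjugate_le_conjugate hAB)
  rw [det_mul, det_mul] at h1
  calc A.det = S.det * S.det * 1 := by rw [← hSS, det_mul, mul_one]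
    _ ≤ S.det * S.det * (S⁻¹.det * B.det * S⁻¹.det) :=
        mul_le_mul_of_nonneg_left h1 (mul_self_nonneg _)
    _ = B.det := by
        linear_combination (S⁻¹.det * S.det + 1) * B.det * det_nonsing_inv_mul_det S hS

theorem one_le_sq_det_of_sum_vecMulVec_eq [Nonempty n] {ι : Type*} [Fintype ι]
    (R : Matrix n n ℝ) {p : ι → ℝ} {v : ι → n → ℝ} (hp : ∀ i, 0 ≤ p i) (hpsum : ∑ i, p i = 1)
    (hv : ∀ i, v i ⬝ᵥ v i ≤ 1)
    (hR : ∑ i, p i • vecMulVec (R *ᵥ v i) (R *ᵥ v i) = (Fintype.card n : ℝ)⁻¹ • 1) :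
    1 ≤ R.det ^ 2 := by
  set c : ℝ := (Fintype.card n : ℝ)⁻¹
  set T := ∑ i, p i • vecMulVec (v i) (v i)
  have hT : T.PosSemidef := posSemidef_sum _ fun i _ ↦ by
    simpa using (posSemidef_vecMulVec_self_star (v i)).smul (hp i)
  have hRT : R * T * Rᵀ = c • 1 := by
    simp only [T, ← hR, Finset.mul_sum, Finset.sum_mul, Matrix.mul_smul, Matrix.smul_mul,
      mul_vecMulVec, vecMulVec_mul, vecMul_transpose]
  have htrace : T.trace ≤ 1 := by
    simp only [T, trace_sum, trace_smul, trace_vecMulVec, smul_eq_mul]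
    calc ∑ i, p i * (v i ⬝ᵥ v i) ≤ ∑ i, p i :=
          Finset.sum_le_sum fun i _ ↦ mul_le_of_le_one_right (hp i) (hv i)
      _ = 1 := hpsum
  have hdetT : T.det ≤ c ^ Fintype.card n := by
    refine hT.det_le_trace_div_card_pow.trans (pow_le_pow_left₀ ?_ ?_ _)
    · exact div_nonneg hT.trace_nonneg (Nat.cast_nonneg _)
    · simpa only [c, one_div] using div_le_div_of_nonneg_right htrace (Nat.cast_nonneg _)
  have hdet : R.det ^ 2 * T.det = c ^ Fintype.card n := by
    have := congrArg det hRT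
    rw [det_mul, det_mul, det_transpose, det_smul, det_one, mul_one] at this
    linear_combination this
  have hc : 0 < c ^ Fintype.card n := by positivity
  have hTpos : 0 < T.det := pos_of_mul_pos_right (hdet ▸ hc) (sq_nonneg _)
  exact le_of_mul_le_mul_right (by rw [one_mul, hdet]; exact hdetT) hTpos

theorem isStarProjection_mul_of_mul_eq_one {M : Matrix m n ℝ} {P : Matrix n m ℝ}
    (hPM : P * M = 1) (hMP : (M * P)ᵀ = M * P) : IsStarProjection (M * P) where
  isIdempotentElem := by
    rw [IsIdempotentElem, Matrix.mul_assoc, ← Matrix.mul_assoc P, hPM, Matrix.one_mul]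
  isSelfAdjoint := by
    rw [IsSelfAdjoint, star_eq_conjTranspose, conjTranspose_eq_transpose_of_trivial, hMP]

theorem det_transpose_mul_self_mul_sq_det_le [DecidableEq m] {M N : Matrix m n ℝ}
    {P : Matrix n m ℝ} (hPM : P * M = 1) (hMP : (M * P)ᵀ = M * P) :
    (Mᵀ * M).det * (P * N).det ^ 2 ≤ (Nᵀ * N).det := by
  have hproj := isStarProjection_mul_of_mul_eq_one hPM hMP
  have hconj : Nᵀ * (M * P) * N = (P * N)ᵀ * (Mᵀ * M) * (P * N) := by
    calc Nᵀ * (M * P) * N = Nᵀ * ((M * P)ᵀ * (M * P)) * N := by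
          rw [hMP, hproj.isIdempotentElem.eq]
      _ = (P * N)ᵀ * (Mᵀ * M) * (P * N) := by simp only [transpose_mul, Matrix.mul_assoc]
  have hproj_psd := nonneg_iff_posSemidef.mp hproj.nonneg
  have hcompl_psd := nonneg_iff_posSemidef.mp hproj.one_sub_nonneg
  calc (Mᵀ * M).det * (P * N).det ^ 2 = (Nᵀ * (M * P) * N).det := by
        rw [hconj, det_mul, det_mul, det_transpose]; ring
    _ ≤ (Nᵀ * N).det := by
        refine det_le_det_of_le ?_ (le_iff.mpr ?_)
        · simpa using nonneg_iff_posSemidef.mpr (hproj_psd.conjTranspose_mul_mul_same N)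
        · simpa [Matrix.mul_sub, Matrix.sub_mul] using hcompl_psd.conjTranspose_mul_mul_same N

end Matrix

theorem stmt0_general (ℓ n : ℕ) (hℓ : 0 < ℓ)
    (𝕊 : Set (Fin ℓ → ℝ)) (h𝕊 : 𝕊 ⊆ stateBall ℓ)
    (𝒮 : Set (Fin ℓ → ℝ)) (h𝒮 : 𝒮 ⊆ 𝕊)
    (k : ℕ) (s : Fin k → (Fin ℓ → ℝ)) (p : Fin k → ℝ)
    (hs : ∀ i, s i ∈ 𝒮)
    (hp : ∀ i, 0 ≤ p i) (hpsum : ∑ i, p i = 1)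
    (hdesign : ∑ i, p i • vecMulVec (s i) (s i) = (ℓ : ℝ)⁻¹ • (1 : Matrix (Fin ℓ) (Fin ℓ) ℝ))
    (M : Matrix (Fin n) (Fin ℓ) ℝ) (P : Matrix (Fin ℓ) (Fin n) ℝ)
    (hMP3 : (M * P)ᵀ = M * P)
    (hPM : P * M = 1)
    (hMu : Mᵀ *ᵥ (1 : Fin n → ℝ) = (1 : Fin ℓ → ℝ))
    (𝒬 : Set (Fin n → ℝ)) (h𝒬 : 𝒬 = (fun v => M *ᵥ v) '' 𝒮) :
    M ∈ ddi 𝕊 𝒬 := by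
  subst h𝒬
  refine ⟨⟨hMu, Set.image_mono h𝒮⟩, fun N ⟨_, hN⟩ ↦ ?_⟩
  choose v hv𝕊 hNv using fun i ↦ hN (Set.mem_image_of_mem _ (hs i))
  have hRv : ∀ i, (P * N) *ᵥ v i = s i := fun i ↦ by
    rw [← mulVec_mulVec, show N *ᵥ v i = M *ᵥ s i from hNv i, mulVec_mulVec, hPM, one_mulVec]
  have : Nonempty (Fin ℓ) := ⟨⟨0, hℓ⟩⟩
  have hR : 1 ≤ (P * N).det ^ 2 :=
    one_le_sq_det_of_sum_vecMulVec_eq _ hp hpsum (fun i ↦ (h𝕊 (hv𝕊 i)).2)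
      (by simpa only [hRv, Fintype.card_fin] using hdesign)
  have hMM : 0 ≤ (Mᵀ * M).det := by
    simpa using (posSemidef_conjTranspose_mul_self M).det_nonneg
  calc (Mᵀ * M).det ≤ (Mᵀ * M).det * (P * N).det ^ 2 := le_mul_of_one_le_right hMM hR
    _ ≤ (Nᵀ * N).det := det_transpose_mul_self_mul_sq_det_le hPM hMP3

/-- If `𝕊 ⊆ 𝔹`, `𝒮 ⊆ 𝕊` supports a spherical 2-design, and the
quasi-measurement `M` (informationally complete, i.e. `P M = I` for a Moore–Penrose
pseudoinverse `P`) satisfies `Mᵀ uₙ = uₗ`, then `M` belongs to the output of the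
data-driven inference map on `𝒬 := M 𝒮`. -/
theorem stmt0 (ℓ n : ℕ) (hℓ : 0 < ℓ) (hn : ℓ ≤ n)
    (𝕊 : Set (Fin ℓ → ℝ)) (h𝕊 : 𝕊 ⊆ stateBall ℓ)
    (𝒮 : Set (Fin ℓ → ℝ)) (h𝒮 : 𝒮 ⊆ 𝕊)
    (k : ℕ) (s : Fin k → (Fin ℓ → ℝ)) (p : Fin k → ℝ)
    (hs : ∀ i, s i ∈ 𝒮)
    (hpure : ∀ i, (1 : Fin ℓ → ℝ) ⬝ᵥ s i = 1 ∧ s i ⬝ᵥ s i = 1)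
    (hp : ∀ i, 0 ≤ p i) (hpsum : ∑ i, p i = 1)
    (hdesign : ∑ i, p i • vecMulVec (s i) (s i) = (ℓ : ℝ)⁻¹ • (1 : Matrix (Fin ℓ) (Fin ℓ) ℝ))
    (M : Matrix (Fin n) (Fin ℓ) ℝ) (P : Matrix (Fin ℓ) (Fin n) ℝ)
    (hMP1 : M * P * M = M) (hMP2 : P * M * P = P)
    (hMP3 : (M * P)ᵀ = M * P) (hMP4 : (P * M)ᵀ = P * M)
    (hPM : P * M = 1)
    (hMu : Mᵀ *ᵥ (1 : Fin n → ℝ) = (1 : Fin ℓ → ℝ))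
    (𝒬 : Set (Fin n → ℝ)) (h𝒬 : 𝒬 = (fun v => M *ᵥ v) '' 𝒮) :
    M ∈ ddi 𝕊 𝒬 :=
  stmt0_general ℓ n hℓ 𝕊 h𝕊 𝒮 h𝒮 k s p hs hp hpsum hdesign M P hMP3 hPM hMu 𝒬 h𝒬
end

section
/- Let s_1, …, s_k ∈ ℝ^ℓ be pure states and p_1, …, p_k ≥ 0 weights with ∑_i p_i = 1 and ∑_i p_i s_i s_iᵀ = (1/ℓ)·I_ℓ. Let M ∈ ℝ^{ℓ×ℓ} be invertible with Mᵀ u_ℓ = u_ℓ, and suppose ‖M⁻¹ s_i‖² ≤ (u_ℓ·(M⁻¹ s_i))² for every i. Then Tr(M⁻¹ M⁻ᵀ) ≤ ℓ, i.e., Tr((MᵀM)⁻¹) ≤ ℓ. -/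
/-!
Conjugating the design identity `∑ pᵢ sᵢ sᵢᵀ = ℓ⁻¹ I` by `M⁻¹` and taking traces gives
`∑ pᵢ ‖M⁻¹ sᵢ‖² = ℓ⁻¹ Tr (M⁻¹ M⁻ᵀ)`. Since `uᵀ M = uᵀ`, also `uᵀ M⁻¹ = uᵀ`, so
`u ⬝ (M⁻¹ sᵢ) = u ⬝ sᵢ = 1` and the hypothesis says `‖M⁻¹ sᵢ‖² ≤ 1`; averaging with the
weights `pᵢ` bounds the left-hand side by `1`.
-/

open Matrix

namespace Matrix

variable {ι m n α : Type*} [Fintype n]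

theorem mul_vecMulVec_mul_transpose [CommSemiring α] (A : Matrix m n α) (a b : n → α) :
    A * vecMulVec a b * Aᵀ = vecMulVec (A *ᵥ a) (A *ᵥ b) := by
  rw [mul_vecMulVec, vecMulVec_mul, vecMul_transpose]

theorem trace_mul_sum_smul_vecMulVec_mul_transpose [Fintype ι] [Fintype m] [CommSemiring α]
    (A : Matrix m n α) (p : ι → α) (s : ι → n → α) :
    (A * (∑ i, p i • vecMulVec (s i) (s i)) * Aᵀ).trace =
      ∑ i, p i * ((A *ᵥ s i) ⬝ᵥ (A *ᵥ s i)) := by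
  simp only [Matrix.mul_sum, Matrix.sum_mul, Matrix.mul_smul, Matrix.smul_mul, trace_sum,
    trace_smul, mul_vecMulVec_mul_transpose, trace_vecMulVec, smul_eq_mul]

theorem vecMul_nonsing_inv_eq_self [DecidableEq n] [CommRing α] {M : Matrix n n α}
    (hM : IsUnit M.det) {v : n → α} (hv : v ᵥ* M = v) : v ᵥ* M⁻¹ = v :=
  calc v ᵥ* M⁻¹ = (v ᵥ* M) ᵥ* M⁻¹ := by rw [hv]
    _ = v := by rw [vecMul_vecMul, mul_nonsing_inv M hM, vecMul_one]

end Matrix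

theorem stmt3_general (ℓ : ℕ) (k : ℕ)
    (s : Fin k → (Fin ℓ → ℝ)) (p : Fin k → ℝ)
    (hpure : ∀ i, (1 : Fin ℓ → ℝ) ⬝ᵥ s i = 1 ∧ s i ⬝ᵥ s i = 1)
    (hp : ∀ i, 0 ≤ p i) (hpsum : ∑ i, p i = 1)
    (hdesign : ∑ i, p i • vecMulVec (s i) (s i) = (ℓ : ℝ)⁻¹ • (1 : Matrix (Fin ℓ) (Fin ℓ) ℝ))
    (M : Matrix (Fin ℓ) (Fin ℓ) ℝ) (hM : IsUnit M.det)
    (hMu : Mᵀ *ᵥ (1 : Fin ℓ → ℝ) = 1)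
    (hin : ∀ i, (M⁻¹ *ᵥ s i) ⬝ᵥ (M⁻¹ *ᵥ s i) ≤ ((1 : Fin ℓ → ℝ) ⬝ᵥ (M⁻¹ *ᵥ s i)) ^ 2) :
    (M⁻¹ * (M⁻¹)ᵀ).trace ≤ (ℓ : ℝ) := by
  obtain rfl | hℓ := ℓ.eq_zero_or_pos
  · simp
  have hu : (1 : Fin ℓ → ℝ) ᵥ* M⁻¹ = 1 :=
    vecMul_nonsing_inv_eq_self hM (by rwa [mulVec_transpose] at hMu)
  have hnorm : ∀ i, (M⁻¹ *ᵥ s i) ⬝ᵥ (M⁻¹ *ᵥ s i) ≤ 1 := fun i => by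
    simpa [dotProduct_mulVec, hu, (hpure i).1] using hin i
  have htrace := trace_mul_sum_smul_vecMulVec_mul_transpose M⁻¹ p s
  rw [hdesign, Matrix.mul_smul, Matrix.smul_mul, Matrix.mul_one, trace_smul,
    smul_eq_mul] at htrace
  have hmean : ∑ i, p i * ((M⁻¹ *ᵥ s i) ⬝ᵥ (M⁻¹ *ᵥ s i)) ≤ 1 :=
    calc ∑ i, p i * ((M⁻¹ *ᵥ s i) ⬝ᵥ (M⁻¹ *ᵥ s i)) ≤ ∑ i, p i :=
          Finset.sum_le_sum fun i _ => mul_le_of_le_one_right (hp i) (hnorm i)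
      _ = 1 := hpsum
  rwa [← htrace, inv_mul_le_iff₀ (by positivity), mul_one] at hmean

/-- Let `s 1, …, s k` be pure states (on the hyperplane `uₗ ⬝ v = 1`,
with unit norm) and `p` nonnegative weights summing to one that form a spherical
2-design, i.e. `∑ i, p i • sᵢ sᵢᵀ = (1/ℓ) I`.  If `M` is invertible with
`Mᵀ uₗ = uₗ` and `‖M⁻¹ sᵢ‖² ≤ (uₗ ⬝ (M⁻¹ sᵢ))²` for every `i`,
then `Tr (M⁻¹ M⁻ᵀ) ≤ ℓ`. -/
theorem stmt3 (ℓ : ℕ) (hℓ : 0 < ℓ) (k : ℕ)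
    (s : Fin k → (Fin ℓ → ℝ)) (p : Fin k → ℝ)
    (hpure : ∀ i, (1 : Fin ℓ → ℝ) ⬝ᵥ s i = 1 ∧ s i ⬝ᵥ s i = 1)
    (hp : ∀ i, 0 ≤ p i) (hpsum : ∑ i, p i = 1)
    (hdesign : ∑ i, p i • vecMulVec (s i) (s i) = (ℓ : ℝ)⁻¹ • (1 : Matrix (Fin ℓ) (Fin ℓ) ℝ))
    (M : Matrix (Fin ℓ) (Fin ℓ) ℝ) (hM : IsUnit M.det)
    (hMu : Mᵀ *ᵥ (1 : Fin ℓ → ℝ) = 1)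
    (hin : ∀ i, (M⁻¹ *ᵥ s i) ⬝ᵥ (M⁻¹ *ᵥ s i) ≤ ((1 : Fin ℓ → ℝ) ⬝ᵥ (M⁻¹ *ᵥ s i)) ^ 2) :
    (M⁻¹ * (M⁻¹)ᵀ).trace ≤ (ℓ : ℝ) :=
  stmt3_general ℓ k s p hpure hp hpsum hdesign M hM hMu hin
end

section
/- Let ℓ ≤ n be positive integers, 𝕊 ⊆ ℝ^ℓ, and let 𝒫 ⊆ ℝ^n span an ℓ-dimensional subspace of ℝ^n. Let M ∈ ℝ^{n×ℓ} with Moore–Penrose pseudoinverse P satisfy P M = I_ℓ, Mᵀ u_n = u_ℓ, and M P p = p for every p ∈ 𝒫, and set 𝒮 := P𝒫 (the image of 𝒫 under p ↦ Pp). Then M ∈ ddi_𝕊(𝒫) if and only if I_ℓ ∈ ddi_𝕊(𝒮). -/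
/-!
Every quasi-measurement `N` consistent with `𝒬` has range of dimension at most `ℓ` containing
`span 𝒬`, which has dimension `ℓ`; so the range of `N` is `span 𝒬`, on which `M P` is the identity,
and `N = M (P N)`. Hence `N' ↦ M N'` is a bijection from `ℳ_𝕊(P𝒬)` onto `ℳ_𝕊(𝒬)` with inverse
`N ↦ P N`, sending `I` to `M`, and it multiplies the objective `det (N'ᵀ N')` by the positive
constant `det (Mᵀ M)`. Minimizers therefore correspond.
-/

open Matrix

section Gram

variable {m k : Type*} [Fintype m] [Fintype k] [DecidableEq k]

lemma det_transpose_mul_self_pos_of_mul_eq_one {M : Matrix m k ℝ} {P : Matrix k m ℝ}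
    (hPM : P * M = 1) : 0 < (Mᵀ * M).det := by
  have hinj : Function.Injective M.mulVec :=
    Function.LeftInverse.injective (g := P.mulVec) fun x => by
      rw [mulVec_mulVec, hPM, one_mulVec]
  simpa using (PosDef.conjTranspose_mul_self M hinj).det_pos

lemma det_transpose_mul_self_mul {R : Type*} [CommRing R] (M : Matrix m k R) (A : Matrix k k R) :
    ((M * A)ᵀ * (M * A)).det = (Aᵀ * A).det * (Mᵀ * M).det := by
  rw [transpose_mul, Matrix.mul_assoc, ← Matrix.mul_assoc Mᵀ, det_mul, det_mul, det_mul,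
    det_transpose]
  ring

end Gram

section Consistency

variable {ℓ n k : ℕ} {𝕊 : Set (Fin ℓ → ℝ)} {𝒬 : Set (Fin n → ℝ)}

lemma span_le_range_of_mem_consistentSet {N : Matrix (Fin n) (Fin ℓ) ℝ}
    (hN : N ∈ consistentSet 𝕊 𝒬) : Submodule.span ℝ 𝒬 ≤ LinearMap.range N.mulVecLin := by
  rw [Submodule.span_le]
  intro q hq
  obtain ⟨v, -, hv⟩ := hN.2 hq
  exact ⟨v, hv⟩

lemma span_eq_range_of_mem_consistentSet (hspan : Module.finrank ℝ (Submodule.span ℝ 𝒬) = ℓ)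
    {N : Matrix (Fin n) (Fin ℓ) ℝ} (hN : N ∈ consistentSet 𝕊 𝒬) :
    Submodule.span ℝ 𝒬 = LinearMap.range N.mulVecLin :=
  Submodule.eq_of_le_of_finrank_le (span_le_range_of_mem_consistentSet hN)
    (by simpa [hspan] using LinearMap.finrank_range_le N.mulVecLin)

lemma mul_eq_of_mem_consistentSet {A : Matrix (Fin n) (Fin n) ℝ} (hA : ∀ p ∈ 𝒬, A *ᵥ p = p)
    (hspan : Module.finrank ℝ (Submodule.span ℝ 𝒬) = ℓ)
    {N : Matrix (Fin n) (Fin ℓ) ℝ} (hN : N ∈ consistentSet 𝕊 𝒬) : A * N = N := by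
  refine ext_iff_mulVec.mpr fun v => ?_
  have hv : N *ᵥ v ∈ Submodule.span ℝ 𝒬 := by
    rw [span_eq_range_of_mem_consistentSet hspan hN]
    exact ⟨v, rfl⟩
  rw [← mulVec_mulVec]
  exact LinearMap.eqOn_span (f := A.mulVecLin) (g := LinearMap.id) hA hv

variable {M : Matrix (Fin n) (Fin k) ℝ} {P : Matrix (Fin k) (Fin n) ℝ}

lemma mul_mem_consistentSet_image (hMu : Mᵀ *ᵥ (1 : Fin n → ℝ) = 1)
    {N : Matrix (Fin n) (Fin ℓ) ℝ} (hMPN : M * (P * N) = N) (hN : N ∈ consistentSet 𝕊 𝒬) :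
    P * N ∈ consistentSet 𝕊 ((fun p => P *ᵥ p) '' 𝒬) := by
  refine ⟨?_, ?_⟩
  · rw [← hMu, mulVec_mulVec, ← transpose_mul, hMPN]
    exact hN.1
  · rintro _ ⟨q, hq, rfl⟩
    obtain ⟨v, hv, rfl⟩ := hN.2 hq
    exact ⟨v, hv, (mulVec_mulVec v P N).symm⟩

lemma mul_mem_consistentSet_of_image (hMu : Mᵀ *ᵥ (1 : Fin n → ℝ) = 1)
    (hfix : ∀ p ∈ 𝒬, M *ᵥ (P *ᵥ p) = p) {N : Matrix (Fin k) (Fin ℓ) ℝ}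
    (hN : N ∈ consistentSet 𝕊 ((fun p => P *ᵥ p) '' 𝒬)) : M * N ∈ consistentSet 𝕊 𝒬 := by
  refine ⟨?_, fun q hq => ?_⟩
  · rw [transpose_mul, ← mulVec_mulVec, hMu]
    exact hN.1
  · obtain ⟨v, hv, hvq⟩ := hN.2 ⟨q, hq, rfl⟩
    refine ⟨v, hv, ?_⟩
    simp only [← mulVec_mulVec, hvq, hfix q hq]

end Consistency

lemma mul_mem_ddi_iff {ℓ n : ℕ} {𝕊 : Set (Fin ℓ → ℝ)} {𝒬 : Set (Fin n → ℝ)}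
    {𝒮 : Set (Fin ℓ → ℝ)} {M : Matrix (Fin n) (Fin ℓ) ℝ} {P : Matrix (Fin ℓ) (Fin n) ℝ}
    (hPM : P * M = 1)
    (hM : ∀ N ∈ consistentSet 𝕊 𝒮, M * N ∈ consistentSet 𝕊 𝒬)
    (hP : ∀ N ∈ consistentSet 𝕊 𝒬, P * N ∈ consistentSet 𝕊 𝒮)
    (hMP : ∀ N ∈ consistentSet 𝕊 𝒬, M * (P * N) = N) (A : Matrix (Fin ℓ) (Fin ℓ) ℝ) :
    M * A ∈ ddi 𝕊 𝒬 ↔ A ∈ ddi 𝕊 𝒮 := by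
  have hd := det_transpose_mul_self_pos_of_mul_eq_one hPM
  have hcons : M * A ∈ consistentSet 𝕊 𝒬 ↔ A ∈ consistentSet 𝕊 𝒮 :=
    ⟨fun h => by simpa only [← Matrix.mul_assoc, hPM, Matrix.one_mul] using hP _ h, hM A⟩
  simp only [ddi, Set.mem_ofPred_eq, hcons, det_transpose_mul_self_mul M]
  refine and_congr_right fun _ => ⟨fun h N hN => ?_, fun h N hN => ?_⟩
  · have := h _ (hM N hN)
    rw [det_transpose_mul_self_mul] at this
    exact le_of_mul_le_mul_right this hd
  · rw [← hMP N hN, det_transpose_mul_self_mul]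
    exact mul_le_mul_of_nonneg_right (h _ (hP N hN)) hd.le

theorem stmt5_general (ℓ n : ℕ)
    (𝕊 : Set (Fin ℓ → ℝ)) (𝒬 : Set (Fin n → ℝ))
    (hspan : Module.finrank ℝ (Submodule.span ℝ 𝒬) = ℓ)
    (M : Matrix (Fin n) (Fin ℓ) ℝ) (P : Matrix (Fin ℓ) (Fin n) ℝ)
    (hPM : P * M = 1)
    (hMu : Mᵀ *ᵥ (1 : Fin n → ℝ) = (1 : Fin ℓ → ℝ))
    (hfix : ∀ p ∈ 𝒬, M *ᵥ (P *ᵥ p) = p)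
    (𝒮 : Set (Fin ℓ → ℝ)) (h𝒮 : 𝒮 = (fun p => P *ᵥ p) '' 𝒬) :
    M ∈ ddi 𝕊 𝒬 ↔ (1 : Matrix (Fin ℓ) (Fin ℓ) ℝ) ∈ ddi 𝕊 𝒮 := by
  subst h𝒮
  have hMP : ∀ N ∈ consistentSet 𝕊 𝒬, M * (P * N) = N := fun N hN => by
    rw [← Matrix.mul_assoc]
    exact mul_eq_of_mem_consistentSet (fun p hp => by rw [← mulVec_mulVec]; exact hfix p hp)
      hspan hN
  simpa using mul_mem_ddi_iff hPM (fun N => mul_mem_consistentSet_of_image hMu hfix)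
    (fun N hN => mul_mem_consistentSet_image hMu (hMP N hN) hN) hMP 1

/-- Let `𝒬 ⊆ ℝⁿ` span an `ℓ`-dimensional subspace, and let `M` be an
informationally complete quasi-measurement (with Moore–Penrose pseudoinverse `P`,
`P M = I`, `Mᵀ uₙ = uₗ`, and `M P p = p` for all `p ∈ 𝒬`).  With `𝒮 := P 𝒬`,
one has `M ∈ ddi_𝕊(𝒬)` if and only if `I ∈ ddi_𝕊(𝒮)`. -/
theorem stmt5 (ℓ n : ℕ) (hℓ : 0 < ℓ) (hn : ℓ ≤ n)
    (𝕊 : Set (Fin ℓ → ℝ)) (𝒬 : Set (Fin n → ℝ))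
    (hspan : Module.finrank ℝ (Submodule.span ℝ 𝒬) = ℓ)
    (M : Matrix (Fin n) (Fin ℓ) ℝ) (P : Matrix (Fin ℓ) (Fin n) ℝ)
    (hMP1 : M * P * M = M) (hMP2 : P * M * P = P)
    (hMP3 : (M * P)ᵀ = M * P) (hMP4 : (P * M)ᵀ = P * M)
    (hPM : P * M = 1)
    (hMu : Mᵀ *ᵥ (1 : Fin n → ℝ) = (1 : Fin ℓ → ℝ))
    (hfix : ∀ p ∈ 𝒬, M *ᵥ (P *ᵥ p) = p)
    (𝒮 : Set (Fin ℓ → ℝ)) (h𝒮 : 𝒮 = (fun p => P *ᵥ p) '' 𝒬) :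
    M ∈ ddi 𝕊 𝒬 ↔ (1 : Matrix (Fin ℓ) (Fin ℓ) ℝ) ∈ ddi 𝕊 𝒮 :=
  stmt5_general ℓ n 𝕊 𝒬 hspan M P hPM hMu hfix 𝒮 h𝒮
end

section
/- Let ℓ ≤ n be positive integers, 𝕊 ⊆ ℝ^ℓ, and let 𝒫 ⊆ ℝ^n span an ℓ-dimensional subspace of ℝ^n. Let M ∈ ℝ^{n×ℓ} with Moore–Penrose pseudoinverse P satisfy P M = I_ℓ, Mᵀ u_n = u_ℓ, and M P p = p for every p ∈ 𝒫. Then for every N ∈ ℳ_𝕊(𝒫), the matrix P N belongs to ℳ_𝕊(P𝒫): (P N)ᵀ u_ℓ = u_ℓ and P𝒫 ⊆ (P N)𝕊. -/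
open Matrix

/-!
Since `M P p = p` and `Mᵀ uₙ = uₗ`, the entries of `P p` sum to the same value as those of `p`
for every `p ∈ 𝒬`, hence for every `p` in the span of `𝒬`. A consistent `N` has `𝒬` inside its
range, which has dimension at most `ℓ = dim span 𝒬`, so the range of `N` is exactly that span.
Thus `P` preserves the column sums of `N`, which is the normalisation `(P N)ᵀ uₗ = Nᵀ uₙ = uₗ`.
-/

namespace Matrix

variable {l m n : Type*}

theorem one_dotProduct_mulVec_of_transpose_mulVec_one {R : Type*} [CommSemiring R]
    [Fintype m] [Fintype n] {M : Matrix m n R}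
    (hM : Mᵀ *ᵥ 1 = 1) (x : n → R) : 1 ⬝ᵥ M *ᵥ x = 1 ⬝ᵥ x := by
  rw [dotProduct_mulVec, ← mulVec_transpose, hM]

theorem transpose_mul_mulVec_one_of_range_le_span {R : Type*} [CommSemiring R]
    [Fintype l] [Fintype m] [Fintype n] {P : Matrix l m R}
    {N : Matrix m n R} {𝒬 : Set (m → R)} (hP : ∀ p ∈ 𝒬, 1 ⬝ᵥ P *ᵥ p = 1 ⬝ᵥ p)
    (hN : LinearMap.range N.mulVecLin ≤ Submodule.span R 𝒬) :
    (P * N)ᵀ *ᵥ 1 = Nᵀ *ᵥ 1 := by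
  have hspan : ∀ x ∈ Submodule.span R 𝒬, 1 ⬝ᵥ P *ᵥ x = 1 ⬝ᵥ x := fun x hx =>
    LinearMap.eqOn_span (f := (dotProductBilin R R 1).comp P.mulVecLin)
      (g := dotProductBilin R R 1) hP hx
  refine dotProduct_eq _ _ fun v => ?_
  rw [mulVec_transpose, mulVec_transpose, ← dotProduct_mulVec, ← dotProduct_mulVec,
    ← mulVec_mulVec]
  exact hspan _ (hN (LinearMap.mem_range_self _ v))

theorem span_eq_range_mulVecLin {K : Type*} [Field K] [Fintype n] {N : Matrix m n K}
    {𝒬 : Set (m → K)} (hQ : 𝒬 ⊆ Set.range (N *ᵥ ·))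
    (hrank : Module.finrank K (Submodule.span K 𝒬) = Fintype.card n) :
    Submodule.span K 𝒬 = LinearMap.range N.mulVecLin := by
  refine Submodule.eq_of_le_of_finrank_le (Submodule.span_le.mpr hQ) ?_
  rw [hrank, ← Module.finrank_fintype_fun_eq_card K]
  exact LinearMap.finrank_range_le _

end Matrix

theorem stmt7_general (ℓ n : ℕ)
    (𝕊 : Set (Fin ℓ → ℝ)) (𝒬 : Set (Fin n → ℝ))
    (hspan : Module.finrank ℝ (Submodule.span ℝ 𝒬) = ℓ)
    (M : Matrix (Fin n) (Fin ℓ) ℝ) (P : Matrix (Fin ℓ) (Fin n) ℝ)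
    (hMu : Mᵀ *ᵥ (1 : Fin n → ℝ) = (1 : Fin ℓ → ℝ))
    (hfix : ∀ p ∈ 𝒬, M *ᵥ (P *ᵥ p) = p)
    (N : Matrix (Fin n) (Fin ℓ) ℝ) (hN : N ∈ consistentSet 𝕊 𝒬) :
    P * N ∈ consistentSet 𝕊 ((fun p => P *ᵥ p) '' 𝒬) := by
  obtain ⟨hNu, hNQ⟩ := hN
  have hrange : Submodule.span ℝ 𝒬 = LinearMap.range N.mulVecLin :=
    span_eq_range_mulVecLin (hNQ.trans (Set.image_subset_range _ _))
      (by rw [hspan, Fintype.card_fin])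
  have hsum : ∀ p ∈ 𝒬, 1 ⬝ᵥ P *ᵥ p = 1 ⬝ᵥ p := fun p hp => by
    conv_rhs => rw [← hfix p hp]
    exact (one_dotProduct_mulVec_of_transpose_mulVec_one hMu _).symm
  refine ⟨?_, ?_⟩
  · rw [transpose_mul_mulVec_one_of_range_le_span hsum hrange.ge, hNu]
  · simpa only [Set.image_image, mulVec_mulVec] using Set.image_mono (f := (P *ᵥ ·)) hNQ

/-- Let `𝒬 ⊆ ℝⁿ` span an `ℓ`-dimensional subspace and let `M` be an
informationally complete quasi-measurement with Moore–Penrose pseudoinverse `P`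
(`P M = I`, `Mᵀ uₙ = uₗ`, `M P p = p` for all `p ∈ 𝒬`).  Then for every
`N ∈ ℳ_𝕊(𝒬)`, the product `P N` belongs to `ℳ_𝕊(P 𝒬)`:
`(P N)ᵀ uₗ = uₗ` and `P 𝒬 ⊆ (P N) 𝕊`. -/
theorem stmt7 (ℓ n : ℕ) (hℓ : 0 < ℓ) (hn : ℓ ≤ n)
    (𝕊 : Set (Fin ℓ → ℝ)) (𝒬 : Set (Fin n → ℝ))
    (hspan : Module.finrank ℝ (Submodule.span ℝ 𝒬) = ℓ)
    (M : Matrix (Fin n) (Fin ℓ) ℝ) (P : Matrix (Fin ℓ) (Fin n) ℝ)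
    (hMP1 : M * P * M = M) (hMP2 : P * M * P = P)
    (hMP3 : (M * P)ᵀ = M * P) (hMP4 : (P * M)ᵀ = P * M)
    (hPM : P * M = 1)
    (hMu : Mᵀ *ᵥ (1 : Fin n → ℝ) = (1 : Fin ℓ → ℝ))
    (hfix : ∀ p ∈ 𝒬, M *ᵥ (P *ᵥ p) = p)
    (N : Matrix (Fin n) (Fin ℓ) ℝ) (hN : N ∈ consistentSet 𝕊 𝒬) :
    P * N ∈ consistentSet 𝕊 ((fun p => P *ᵥ p) '' 𝒬) :=
  stmt7_general ℓ n 𝕊 𝒬 hspan M P hMu hfix N hN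
end

section
/- Let M ∈ ℝ^{n×ℓ} have Moore–Penrose pseudoinverse P ∈ ℝ^{ℓ×n}. If Mᵀ u_n = P M u_ℓ, then Pᵀ u_ℓ = M P u_n. (The set of quasi-measurements is closed under pseudoinversion.) -/
open Matrix

namespace Matrix

variable {R m n : Type*} [CommSemiring R] [Fintype m] [Fintype n]

theorem transpose_mul_mul_eq_transpose {M : Matrix n m R} {P : Matrix m n R}
    (hPMP : P * M * P = P) (hPM : (P * M)ᵀ = P * M) : Pᵀ * (P * M) = Pᵀ := by
  rw [← hPM, ← transpose_mul, hPMP]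

theorem transpose_mulVec_eq_mul_mulVec_of_transpose_mulVec_eq
    {M : Matrix n m R} {P : Matrix m n R} (hPMP : P * M * P = P)
    (hMP : (M * P)ᵀ = M * P) (hPM : (P * M)ᵀ = P * M)
    {u : m → R} {v : n → R} (h : Mᵀ *ᵥ v = (P * M) *ᵥ u) :
    Pᵀ *ᵥ u = (M * P) *ᵥ v :=
  calc Pᵀ *ᵥ u = (Pᵀ * (P * M)) *ᵥ u := by rw [transpose_mul_mul_eq_transpose hPMP hPM]
    _ = Pᵀ *ᵥ (Mᵀ *ᵥ v) := by rw [← mulVec_mulVec, h]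
    _ = (M * P)ᵀ *ᵥ v := by rw [mulVec_mulVec, transpose_mul]
    _ = (M * P) *ᵥ v := by rw [hMP]

end Matrix

theorem stmt12_general (ℓ n : ℕ)
    (M : Matrix (Fin n) (Fin ℓ) ℝ) (P : Matrix (Fin ℓ) (Fin n) ℝ)
    (hMP2 : P * M * P = P)
    (hMP3 : (M * P)ᵀ = M * P) (hMP4 : (P * M)ᵀ = P * M)
    (h : Mᵀ *ᵥ (1 : Fin n → ℝ) = (P * M) *ᵥ (1 : Fin ℓ → ℝ)) :
    Pᵀ *ᵥ (1 : Fin ℓ → ℝ) = (M * P) *ᵥ (1 : Fin n → ℝ) :=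
  transpose_mulVec_eq_mul_mulVec_of_transpose_mulVec_eq hMP2 hMP3 hMP4 h

/-- closure under pseudoinversion.  Let `M ∈ ℝ^{n×ℓ}` have
Moore–Penrose pseudoinverse `P ∈ ℝ^{ℓ×n}`.  If `Mᵀ uₙ = P M uₗ`, then
`Pᵀ uₗ = M P uₙ`. -/
theorem stmt12 (ℓ n : ℕ) (hℓ : 0 < ℓ) (hn : 0 < n)
    (M : Matrix (Fin n) (Fin ℓ) ℝ) (P : Matrix (Fin ℓ) (Fin n) ℝ)
    (hMP1 : M * P * M = M) (hMP2 : P * M * P = P)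
    (hMP3 : (M * P)ᵀ = M * P) (hMP4 : (P * M)ᵀ = P * M)
    (h : Mᵀ *ᵥ (1 : Fin n → ℝ) = (P * M) *ᵥ (1 : Fin ℓ → ℝ)) :
    Pᵀ *ᵥ (1 : Fin ℓ → ℝ) = (M * P) *ᵥ (1 : Fin n → ℝ) :=
  stmt12_general ℓ n M P hMP2 hMP3 hMP4 h
end

section
/- Let ℓ be a positive integer and let G := {O in the orthogonal group of ℝ^{ℓ×ℓ} : O u_ℓ = u_ℓ}, a compact topological group under matrix multiplication, with Haar probability measure μ. Then for every pure state s ∈ ℝ^ℓ (u_ℓ·s = 1 and ‖s‖ = 1) and all indices i, j: ∫_G (O s)_i (O s)_j dμ(O) = (1/ℓ)·δ_{ij}; that is, ∫_G O (s sᵀ) Oᵀ dμ(O) = (1/ℓ)·I_ℓ. -/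
/-!
The permutation matrices lie in `G`, so by invariance of `μ` the second-moment matrix
`M a b = ∫ (O s)_a (O s)_b dμ` is invariant under simultaneous permutations of rows and columns:
its diagonal entries are all equal, and so are its off-diagonal ones. Since `O` is orthogonal and
fixes `uₗ`, the vector `O s` is again a pure state. `‖O s‖ = 1` makes the trace of `M` equal
to `1`, and `uₗ ⬝ O s = 1` makes each row sum of `M` equal to a mean `∫ (O s)_a dμ`, which is
`1/ℓ` by the same symmetry. So the diagonal is `1/ℓ`, and the common off-diagonal value `c`
satisfies `1/ℓ + (ℓ - 1) c = 1/ℓ`, whence `c = 0` (for `ℓ ≥ 2`, the only case with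
off-diagonal entries).
-/

open Matrix MeasureTheory

instance matrixMeasurableSpace (ℓ : ℕ) : MeasurableSpace (Matrix (Fin ℓ) (Fin ℓ) ℝ) :=
  MeasurableSpace.pi

def IsPureState {ι : Type*} [Fintype ι] (x : ι → ℝ) : Prop :=
  1 ⬝ᵥ x = 1 ∧ x ⬝ᵥ x = 1

section PermInvariant

variable {ι : Type*} [Fintype ι] [DecidableEq ι]

lemma eq_inv_card_of_perm_invariant {v : ι → ℝ} (hv : ∀ (σ : Equiv.Perm ι) a, v (σ a) = v a)
    (hsum : ∑ k, v k = 1) (a : ι) : v a = (Fintype.card ι : ℝ)⁻¹ := by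
  have hconst : ∀ k, v k = v a := fun k => by simpa using (hv (Equiv.swap k a) k).symm
  have hcard : (Fintype.card ι : ℝ) * v a = 1 := by
    simpa [hconst, Finset.sum_const, Finset.card_univ] using hsum
  exact eq_inv_of_mul_eq_one_right hcard

lemma eq_inv_card_mul_ite_of_perm_invariant {M : ι → ι → ℝ}
    (hM : ∀ (σ : Equiv.Perm ι) a b, M (σ a) (σ b) = M a b)
    (htrace : ∑ k, M k k = 1) (hrow : ∀ a, ∑ k, M a k = (Fintype.card ι : ℝ)⁻¹) (a b : ι) :
    M a b = (Fintype.card ι : ℝ)⁻¹ * if a = b then 1 else 0 := by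
  have hdiag : ∀ c, M c c = (Fintype.card ι : ℝ)⁻¹ :=
    eq_inv_card_of_perm_invariant (v := fun c => M c c) (fun σ c => hM σ c c) htrace
  rcases eq_or_ne a b with rfl | hab
  · rw [hdiag, if_pos rfl, mul_one]
  have hoff : ∀ k, M a k = M a b + if k = a then M a a - M a b else 0 := by
    intro k
    rcases eq_or_ne k a with rfl | hka
    · simp
    · simpa [Equiv.swap_apply_of_ne_of_ne hab (Ne.symm hka), hka] using hM (Equiv.swap b k) a b
  have hcard : (1 : ℝ) < Fintype.card ι := by
    exact_mod_cast Fintype.one_lt_card_iff_nontrivial.2 ⟨a, b, hab⟩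
  have hsum := hrow a
  rw [Finset.sum_congr rfl fun k _ => hoff k] at hsum
  simp only [Finset.sum_add_distrib, Finset.sum_ite_eq', Finset.mem_univ, if_true,
    Finset.sum_const, Finset.card_univ, nsmul_eq_mul, hdiag] at hsum
  have hzero : ((Fintype.card ι : ℝ) - 1) * M a b = 0 := by linarith
  simpa [hab, sub_ne_zero.2 hcard.ne'] using hzero

end PermInvariant

lemma abs_apply_le_one_of_dotProduct_self_eq_one {ι : Type*} [Fintype ι] {x : ι → ℝ}
    (hx : x ⬝ᵥ x = 1) (k : ι) : |x k| ≤ 1 := by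
  rw [abs_le_one_iff_mul_self_le_one, ← hx]
  exact Finset.single_le_sum (f := fun k => x k * x k) (fun k _ => mul_self_nonneg _)
    (Finset.mem_univ k)

section PermInvariantMeasure

variable {ι : Type*} {ν : Measure (ι → ℝ)}

lemma integral_comp_perm_of_map_eq (hν : ∀ σ : Equiv.Perm ι, ν.map (· ∘ σ) = ν)
    {f : (ι → ℝ) → ℝ} (hf : AEStronglyMeasurable f ν) (σ : Equiv.Perm ι) :
    ∫ x, f (x ∘ σ) ∂ν = ∫ x, f x ∂ν := by
  conv_rhs => rw [← hν σ]
  rw [integral_map (Measurable.aemeasurable (by fun_prop)) (by rwa [hν σ])]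

variable [Fintype ι] [DecidableEq ι] [IsProbabilityMeasure ν]

theorem integral_mul_apply_eq_of_perm_invariant
    (hν : ∀ σ : Equiv.Perm ι, ν.map (· ∘ σ) = ν) (hpure : ∀ᵐ x ∂ν, IsPureState x) (i j : ι) :
    ∫ x, x i * x j ∂ν = (Fintype.card ι : ℝ)⁻¹ * if i = j then 1 else 0 := by
  have hbound : ∀ᵐ x ∂ν, ∀ k, |x k| ≤ 1 := hpure.mono fun x hx =>
    abs_apply_le_one_of_dotProduct_self_eq_one hx.2
  have hint : ∀ k, Integrable (fun x : ι → ℝ => x k) ν := fun k =>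
    .of_bound (measurable_pi_apply k).aestronglyMeasurable 1 (hbound.mono fun x hx => hx k)
  have hint₂ : ∀ a b, Integrable (fun x : ι → ℝ => x a * x b) ν := fun a b =>
    (hint b).bdd_mul (measurable_pi_apply a).aestronglyMeasurable (hbound.mono fun x hx => hx a)
  have hsum_ae : ∀ᵐ x ∂ν, ∑ k, x k = 1 :=
    hpure.mono fun x hx => by simpa [dotProduct] using hx.1
  have hsum : ∑ k, ∫ x, x k ∂ν = 1 := by
    rw [← integral_finsetSum _ fun k _ => hint k, integral_congr_ae hsum_ae]
    simp
  have htrace : ∑ k, ∫ x, x k * x k ∂ν = 1 := by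
    rw [← integral_finsetSum _ fun k _ => hint₂ k k]
    exact (integral_congr_ae (hpure.mono fun x hx => hx.2)).trans (by simp)
  have hmean : ∀ a, ∫ x, x a ∂ν = (Fintype.card ι : ℝ)⁻¹ :=
    eq_inv_card_of_perm_invariant
      (fun σ a => integral_comp_perm_of_map_eq hν (hint a).1 σ) hsum
  have hrow : ∀ a, ∑ k, ∫ x, x a * x k ∂ν = (Fintype.card ι : ℝ)⁻¹ := by
    intro a
    rw [← integral_finsetSum _ fun k _ => hint₂ a k, ← hmean a]
    refine integral_congr_ae (hsum_ae.mono fun x hx => ?_)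
    simp [← Finset.mul_sum, hx]
  exact eq_inv_card_mul_ite_of_perm_invariant (M := fun a b => ∫ x, x a * x b ∂ν)
    (fun σ a b => integral_comp_perm_of_map_eq hν (hint₂ a b).1 σ) htrace hrow i j

end PermInvariantMeasure

lemma measurableSet_isPureState {ι : Type*} [Fintype ι] :
    MeasurableSet {x : ι → ℝ | IsPureState x} := by
  unfold IsPureState
  measurability

lemma isPureState_mulVec {ι : Type*} [Fintype ι] [DecidableEq ι] {O : Matrix ι ι ℝ}
    (hO : Oᵀ * O = 1) (hO1 : O *ᵥ 1 = 1) {s : ι → ℝ} (hs : IsPureState s) :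
    IsPureState (O *ᵥ s) := by
  have hOT1 : Oᵀ *ᵥ 1 = 1 := by rw [← hO1, mulVec_mulVec, hO, one_mulVec, hO1]
  constructor
  · rw [dotProduct_mulVec, ← mulVec_transpose, hOT1, hs.1]
  · rw [dotProduct_mulVec, ← mulVec_transpose, mulVec_mulVec, hO, one_mulVec, hs.2]

lemma transpose_permMatrix_mul_self {ι : Type*} [Fintype ι] [DecidableEq ι] (σ : Equiv.Perm ι) :
    (σ.permMatrix ℝ)ᵀ * σ.permMatrix ℝ = 1 := by
  rw [transpose_permMatrix, ← permMatrix_mul, mul_inv_cancel, permMatrix_one]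

instance matrixBorelSpace (ℓ : ℕ) : BorelSpace (Matrix (Fin ℓ) (Fin ℓ) ℝ) :=
  inferInstanceAs (BorelSpace (Fin ℓ → Fin ℓ → ℝ))

lemma measurable_mulVec_const {ℓ : ℕ} (s : Fin ℓ → ℝ) :
    Measurable fun O : Matrix (Fin ℓ) (Fin ℓ) ℝ => O *ᵥ s :=
  (continuous_id.matrix_mulVec continuous_const).measurable

lemma map_comp_perm_map_mulVec {ℓ : ℕ} {μ : Measure (Matrix (Fin ℓ) (Fin ℓ) ℝ)}
    (s : Fin ℓ → ℝ) (σ : Equiv.Perm (Fin ℓ)) (hσ : μ.map (σ.permMatrix ℝ * ·) = μ) :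
    (μ.map (· *ᵥ s)).map (· ∘ σ) = μ.map (· *ᵥ s) := by
  have hmul : Measurable fun O : Matrix (Fin ℓ) (Fin ℓ) ℝ => σ.permMatrix ℝ * O :=
    (continuous_const.mul continuous_id).measurable
  conv_rhs => rw [← hσ]
  rw [Measure.map_map (by fun_prop) (measurable_mulVec_const s),
    Measure.map_map (measurable_mulVec_const s) hmul]
  congr 1
  funext O
  simp [← mulVec_mulVec, permMatrix_mulVec]

theorem stmt13_general (ℓ : ℕ)
    (G : Set (Matrix (Fin ℓ) (Fin ℓ) ℝ))
    (hG : G = {O | Oᵀ * O = 1 ∧ O *ᵥ (1 : Fin ℓ → ℝ) = (1 : Fin ℓ → ℝ)})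
    (μ : Measure (Matrix (Fin ℓ) (Fin ℓ) ℝ)) [IsProbabilityMeasure μ]
    (hsupp : ∀ᵐ O ∂μ, O ∈ G)
    (hinv : ∀ R ∈ G, Measure.map (fun O => R * O) μ = μ)
    (s : Fin ℓ → ℝ)
    (hs1 : (1 : Fin ℓ → ℝ) ⬝ᵥ s = 1) (hs2 : s ⬝ᵥ s = 1)
    (i j : Fin ℓ) :
    ∫ O, (O *ᵥ s) i * (O *ᵥ s) j ∂μ = (ℓ : ℝ)⁻¹ * (if i = j then 1 else 0) := by
  subst hG
  have hmeas := measurable_mulVec_const s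
  have : IsProbabilityMeasure (μ.map (· *ᵥ s)) :=
    Measure.isProbabilityMeasure_map hmeas.aemeasurable
  have hperm (σ : Equiv.Perm (Fin ℓ)) : (μ.map (· *ᵥ s)).map (· ∘ σ) = μ.map (· *ᵥ s) :=
    map_comp_perm_map_mulVec s σ <|
      hinv _ ⟨transpose_permMatrix_mul_self σ, by simp [permMatrix_mulVec]⟩
  have hpure : ∀ᵐ x ∂μ.map (· *ᵥ s), IsPureState x :=
    (ae_map_iff hmeas.aemeasurable measurableSet_isPureState).2 <|
      hsupp.mono fun O hO => isPureState_mulVec hO.1 hO.2 ⟨hs1, hs2⟩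
  have h := integral_mul_apply_eq_of_perm_invariant hperm hpure i j
  rwa [integral_map hmeas.aemeasurable (by fun_prop), Fintype.card_fin] at h

/-- Let `G` be the stabilizer of the all-ones vector `uₗ` in the
orthogonal group of `ℝ^{ℓ×ℓ}`, a compact group, and let `μ` be its Haar probability
measure, viewed as a probability measure on matrices concentrated on `G` and invariant
under left translation by elements of `G`.  Then for every pure state `s`
(`uₗ ⬝ s = 1`, `‖s‖ = 1`) and all indices `i j`,
`∫ (O s)ᵢ (O s)ⱼ dμ(O) = (1/ℓ) δᵢⱼ`, i.e. `∫ O s sᵀ Oᵀ dμ(O) = (1/ℓ) I`. -/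
theorem stmt13 (ℓ : ℕ) (hℓ : 0 < ℓ)
    (G : Set (Matrix (Fin ℓ) (Fin ℓ) ℝ))
    (hG : G = {O | Oᵀ * O = 1 ∧ O *ᵥ (1 : Fin ℓ → ℝ) = (1 : Fin ℓ → ℝ)})
    (μ : Measure (Matrix (Fin ℓ) (Fin ℓ) ℝ)) [IsProbabilityMeasure μ]
    (hsupp : ∀ᵐ O ∂μ, O ∈ G)
    (hinv : ∀ R ∈ G, Measure.map (fun O => R * O) μ = μ)
    (s : Fin ℓ → ℝ)
    (hs1 : (1 : Fin ℓ → ℝ) ⬝ᵥ s = 1) (hs2 : s ⬝ᵥ s = 1)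
    (i j : Fin ℓ) :
    ∫ O, (O *ᵥ s) i * (O *ᵥ s) j ∂μ = (ℓ : ℝ)⁻¹ * (if i = j then 1 else 0) :=
  stmt13_general ℓ G hG μ hsupp hinv s hs1 hs2 i j
end

section
/- Let ℓ be a positive integer and let A ∈ ℝ^{ℓ×ℓ} satisfy O A Oᵀ = A for every orthogonal matrix O ∈ ℝ^{ℓ×ℓ} with O u_ℓ = u_ℓ. Then there exist λ, ν ∈ ℝ such that A = λ·(I_ℓ − (1/ℓ)·u_ℓ u_ℓᵀ) + ν·(1/ℓ)·u_ℓ u_ℓᵀ. -/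
/-!
Permutation matrices are orthogonal and fix `u_ℓ`, so `A` is invariant under simultaneous
permutations of its rows and columns. As the symmetric group acts 2-transitively, `A` then has
a constant diagonal and a constant off-diagonal, i.e. `A = a I + b u_ℓ u_ℓᵀ`, which is the
claimed combination of projections with `λ = a` and `ν = a + ℓ b`.
-/

open Matrix

lemma Equiv.Perm.exists_apply_eq_apply_eq {α : Type*} [DecidableEq α] {i j k l : α}
    (hij : i ≠ j) (hkl : k ≠ l) : ∃ σ : Equiv.Perm α, σ i = k ∧ σ j = l := by
  set j' := Equiv.swap i k j
  have hj'k : k ≠ j' := by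
    simpa [j'] using (Equiv.swap i k).injective.ne hij
  refine ⟨(Equiv.swap i k).trans (Equiv.swap j' l), ?_, ?_⟩
  · simp [Equiv.swap_apply_of_ne_of_ne hj'k hkl]
  · simp [j']

namespace Matrix

variable {n R : Type*} [DecidableEq n]

lemma permMatrix_mul_mul_transpose_permMatrix [Fintype n] [Semiring R] (σ : Equiv.Perm n)
    (A : Matrix n n R) : σ.permMatrix R * A * (σ.permMatrix R)ᵀ = A.submatrix σ σ := by
  rw [transpose_permMatrix, PEquiv.toMatrix_toPEquiv_mul, PEquiv.mul_toMatrix_toPEquiv]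
  rfl

lemma transpose_permMatrix_mul_self [Fintype n] [Semiring R] (σ : Equiv.Perm n) :
    (σ.permMatrix R)ᵀ * σ.permMatrix R = 1 := by
  rw [transpose_permMatrix, ← permMatrix_mul, mul_inv_cancel, permMatrix_one]

lemma apply_perm_of_forall_orthogonal_fixing_one [Fintype n] [CommRing R] (A : Matrix n n R)
    (hA : ∀ O : Matrix n n R, Oᵀ * O = 1 → O *ᵥ 1 = 1 → O * A * Oᵀ = A)
    (σ : Equiv.Perm n) (i j : n) : A (σ i) (σ j) = A i j := by
  have hσ := hA _ (transpose_permMatrix_mul_self σ) (by rw [permMatrix_mulVec]; rfl)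
  rw [permMatrix_mul_mul_transpose_permMatrix] at hσ
  exact congrFun₂ hσ i j

lemma exists_eq_smul_one_add_smul_vecMulVec_of_apply_perm [Ring R] (A : Matrix n n R)
    (hA : ∀ (σ : Equiv.Perm n) i j, A (σ i) (σ j) = A i j) :
    ∃ a b : R, A = a • 1 + b • vecMulVec 1 1 := by
  obtain ⟨d, hd⟩ : ∃ d, ∀ i, A i i = d := by
    rcases isEmpty_or_nonempty n with _ | ⟨⟨i₀⟩⟩
    · exact ⟨0, isEmptyElim⟩
    · exact ⟨A i₀ i₀, fun i => by simpa using hA (Equiv.swap i₀ i) i₀ i₀⟩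
  obtain ⟨b, hb⟩ : ∃ b, ∀ i j, i ≠ j → A i j = b := by
    by_cases h : ∃ k l : n, k ≠ l
    · obtain ⟨k, l, hkl⟩ := h
      refine ⟨A k l, fun i j hij => ?_⟩
      obtain ⟨σ, rfl, rfl⟩ := Equiv.Perm.exists_apply_eq_apply_eq hkl hij
      exact hA σ k l
    · push Not at h
      exact ⟨0, fun i j hij => absurd (h i j) hij⟩
  refine ⟨d - b, b, Matrix.ext fun i j => ?_⟩
  by_cases hij : i = j
  · simp [hij, hd]
  · simp [hij, hb i j hij]

end Matrix

/-- If `A ∈ ℝ^{ℓ×ℓ}` satisfies `O A Oᵀ = A` for every orthogonal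
matrix `O` fixing the all-ones vector `uₗ`, then `A` is a combination
`λ (I − uₗuₗᵀ/ℓ) + ν uₗuₗᵀ/ℓ` of the projections onto the hyperplane orthogonal to
`uₗ` and onto the span of `uₗ`. -/
theorem stmt14 (ℓ : ℕ) (hℓ : 0 < ℓ)
    (A : Matrix (Fin ℓ) (Fin ℓ) ℝ)
    (hA : ∀ O : Matrix (Fin ℓ) (Fin ℓ) ℝ,
      Oᵀ * O = 1 → O *ᵥ (1 : Fin ℓ → ℝ) = (1 : Fin ℓ → ℝ) → O * A * Oᵀ = A) :
    ∃ lam nu : ℝ,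
      A = lam • ((1 : Matrix (Fin ℓ) (Fin ℓ) ℝ) -
            (ℓ : ℝ)⁻¹ • vecMulVec (1 : Fin ℓ → ℝ) (1 : Fin ℓ → ℝ)) +
          nu • ((ℓ : ℝ)⁻¹ • vecMulVec (1 : Fin ℓ → ℝ) (1 : Fin ℓ → ℝ)) := by
  obtain ⟨a, b, rfl⟩ := exists_eq_smul_one_add_smul_vecMulVec_of_apply_perm A
    (apply_perm_of_forall_orthogonal_fixing_one A hA)
  refine ⟨a, a + ℓ * b, ?_⟩
  have hℓ' : (ℓ : ℝ) ≠ 0 := by positivity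
  match_scalars
  · ring
  · field_simp
    ring
end

section
/- Let s_1, …, s_ℓ ∈ ℝ^ℓ be pure states and p_1, …, p_ℓ ≥ 0 weights with ∑_i p_i = 1 and ∑_i p_i s_i s_iᵀ = (1/ℓ)·I_ℓ. Then p_i = 1/ℓ for every i and s_i·s_j = 0 for all i ≠ j; that is, the only ℓ-element set of pure states supporting a spherical 2-design is a regular simplex, namely an orthonormal basis of ℝ^ℓ lying on the hyperplane u_ℓ·v = 1. -/
open Matrix

/-!
Stack the weighted states `√pᵢ sᵢ` as the rows of a square matrix `A`. The design condition says
`Aᵀ A = ℓ⁻¹ I`; for a square matrix this forces `A Aᵀ = ℓ⁻¹ I` as well, and the entries of `A Aᵀ`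
are `√pᵢ √pⱼ (sᵢ ⬝ sⱼ)`. Since each `sᵢ` is a unit vector, the diagonal gives `pᵢ = ℓ⁻¹`, and the
off-diagonal then gives `sᵢ ⬝ sⱼ = 0`.
-/

namespace Matrix

variable {ι n : Type*} [Fintype ι] [DecidableEq ι]

theorem sum_smul_vecMulVec_self_eq_transpose_mul_self (p : ι → ℝ) (hp : ∀ i, 0 ≤ p i)
    (s : ι → n → ℝ) :
    ∑ i, p i • vecMulVec (s i) (s i) =
      (diagonal (fun i => √(p i)) * of s)ᵀ * (diagonal (fun i => √(p i)) * of s) := by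
  ext k l
  rw [sum_apply, mul_apply]
  simp only [Matrix.smul_apply, vecMulVec_apply, smul_eq_mul, transpose_apply, diagonal_mul,
    of_apply]
  refine Finset.sum_congr rfl fun i _ => ?_
  linear_combination (-(s i k * s i l)) * Real.mul_self_sqrt (hp i)

theorem diagonal_mul_of_mul_transpose_apply {R : Type*} [CommSemiring R] [Fintype n]
    (d : ι → R) (s : ι → n → R) (i j : ι) :
    (diagonal d * of s * (diagonal d * of s)ᵀ) i j = d i * d j * (s i ⬝ᵥ s j) := by
  rw [mul_apply, dotProduct, Finset.mul_sum]
  simp only [transpose_apply, diagonal_mul, of_apply]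
  exact Finset.sum_congr rfl fun k _ => by ring

theorem mul_transpose_eq_smul_one_of_transpose_mul {A : Matrix ι ι ℝ} {c : ℝ}
    (h : Aᵀ * A = c • 1) : A * Aᵀ = c • 1 := by
  rcases eq_or_ne c 0 with rfl | hc
  · have hA : A = 0 := conjTranspose_mul_self_eq_zero.mp (by simpa using h)
    simp [hA]
  · have hinv : A * (c⁻¹ • Aᵀ) = 1 :=
      mul_eq_one_comm.mp (by rw [smul_mul, h, smul_smul, inv_mul_cancel₀ hc, one_smul])
    rw [Matrix.mul_smul] at hinv
    rw [← hinv, smul_smul, mul_inv_cancel₀ hc, one_smul]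

end Matrix

theorem stmt17_general (ℓ : ℕ)
    (s : Fin ℓ → (Fin ℓ → ℝ)) (p : Fin ℓ → ℝ)
    (hpure : ∀ i, (1 : Fin ℓ → ℝ) ⬝ᵥ s i = 1 ∧ s i ⬝ᵥ s i = 1)
    (hp : ∀ i, 0 ≤ p i)
    (hdesign : ∑ i, p i • vecMulVec (s i) (s i) = (ℓ : ℝ)⁻¹ • (1 : Matrix (Fin ℓ) (Fin ℓ) ℝ)) :
    (∀ i, p i = (ℓ : ℝ)⁻¹) ∧ ∀ i j, i ≠ j → s i ⬝ᵥ s j = 0 := by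
  set A := diagonal (fun i => √(p i)) * of s
  have hAAt : A * Aᵀ = (ℓ : ℝ)⁻¹ • 1 := mul_transpose_eq_smul_one_of_transpose_mul <| by
    rw [← hdesign, sum_smul_vecMulVec_self_eq_transpose_mul_self p hp s]
  have hgram (i j : Fin ℓ) :
      √(p i) * √(p j) * (s i ⬝ᵥ s j) = (ℓ : ℝ)⁻¹ * if i = j then 1 else 0 := by
    have h := diagonal_mul_of_mul_transpose_apply (fun k => √(p k)) s i j
    rw [hAAt, Matrix.smul_apply, one_apply, smul_eq_mul] at h
    exact h.symm
  have hweight (i : Fin ℓ) : p i = (ℓ : ℝ)⁻¹ := by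
    simpa [(hpure i).2, Real.mul_self_sqrt (hp i)] using hgram i i
  refine ⟨hweight, fun i j hij => ?_⟩
  have hpos (k : Fin ℓ) : 0 < √(p k) := by
    rw [hweight k, Real.sqrt_pos, inv_pos, Nat.cast_pos]
    exact k.pos
  simpa [hij, (hpos i).ne', (hpos j).ne'] using hgram i j

/-- If `ℓ` pure states `s₁, …, s_ℓ` with weights `p₁, …, p_ℓ`
form a spherical 2-design, i.e. `∑ i, pᵢ • sᵢ sᵢᵀ = (1/ℓ) I`, then `pᵢ = 1/ℓ` for
every `i` and the states are pairwise orthogonal: the only `ℓ`-element set of pure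
states supporting a spherical 2-design is a regular simplex, namely an orthonormal
basis of `ℝ^ℓ` lying on the hyperplane `uₗ ⬝ v = 1`. -/
theorem stmt17 (ℓ : ℕ) (hℓ : 0 < ℓ)
    (s : Fin ℓ → (Fin ℓ → ℝ)) (p : Fin ℓ → ℝ)
    (hpure : ∀ i, (1 : Fin ℓ → ℝ) ⬝ᵥ s i = 1 ∧ s i ⬝ᵥ s i = 1)
    (hp : ∀ i, 0 ≤ p i) (hpsum : ∑ i, p i = 1)
    (hdesign : ∑ i, p i • vecMulVec (s i) (s i) = (ℓ : ℝ)⁻¹ • (1 : Matrix (Fin ℓ) (Fin ℓ) ℝ)) :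
    (∀ i, p i = (ℓ : ℝ)⁻¹) ∧ ∀ i j, i ≠ j → s i ⬝ᵥ s j = 0 :=
  stmt17_general ℓ s p hpure hp hdesign
end
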